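/- arXiv:2404.05154 — 2 statements merged into one kernel-verified Lean document; each statement's English description precedes it below -/
import Mathlib

section
/- Suppose δ > d ≥ 1 and γ > 0, and set α₀ = γ/(δ−d). Then the set I_f = { l > 0 : γ + l d ≥ i + l j and γ + l d ≥ l δ for all (i,j) with b_{ij} ≠ 0 } equals the closed interval [ max_{j < d, b_{ij} ≠ 0} (i − γ)/(d − j), α₀ ], where (γ,d) = (n₁,m₁) is the vertex of the Newton polygon of q with largest y-coordinate, and in particular min I_f = l₁ = (n₂−n₁)/(m₁−m₂) provided the Newton polygon has at least two vertices. -/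
open Set

noncomputable section

/-- The quadrant `D(i,j) = {(x,y) : x ≤ i, y ≤ j}`. -/
def quadrant (i j : ℕ) : Set (ℝ × ℝ) := {p | p.1 ≤ (i : ℝ) ∧ p.2 ≤ (j : ℝ)}

/-- The Newton polygon of `q = Σ b_{ij} z^i w^j`: the convex hull of the union of
the quadrants `D(i,j)` over all `(i,j)` with `b_{ij} ≠ 0`. -/
def newtonPolygon (b : ℕ → ℕ → ℂ) : Set (ℝ × ℝ) :=
  convexHull ℝ (⋃ (i : ℕ) (j : ℕ) (_ : b i j ≠ 0), quadrant i j)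

/-- `n, m : ℕ → ℕ` (on indices `1,…,s`) enumerate the vertices of the Newton polygon
of `q`, with `n 1 < … < n s` and `m 1 > … > m s`. -/
def IsNewtonVertexData (b : ℕ → ℕ → ℂ) (s : ℕ) (n m : ℕ → ℕ) : Prop :=
  1 ≤ s ∧
  StrictMonoOn n (Set.Icc 1 s) ∧
  StrictAntiOn m (Set.Icc 1 s) ∧
  Set.extremePoints ℝ (newtonPolygon b) =
    (fun k => ((n k : ℝ), (m k : ℝ))) '' (Set.Icc 1 s)

/-!
The Newton polygon `P` is a convex lower set, so an extreme point `v` of `P` is maximal in `P`,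
and every point of `P` below `v` lies under the line through `v` and any point of `P` above `v`.
Applied to the first two vertices this bounds the exponents, so the support is finite, and then
every functional `x + L y` with `L > 0` attains its maximum over the support at a vertex. For
large `L` this gives `j ≤ m₁` on the support; for `L = l₁` it shows that the support lies below
the edge from `(n₁, m₁)` to `(n₂, m₂)`: `i + l₁ j ≤ n₁ + l₁ m₁`. Together these say exactly that
`l ≥ l₁` is the condition on `l` coming from the support, and `l ≤ α₀` is the one coming from `δ`.
-/

open Pointwise Filter Topology

section OrderedModule

variable {E : Type*} [AddCommGroup E] [PartialOrder E] [IsOrderedAddMonoid E] [Module ℝ E]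
  {S : Set E}

theorem IsLowerSet.convexHull (hS : IsLowerSet S) : IsLowerSet (convexHull ℝ S) := by
  intro x y hyx hx
  have hshift : S + {y - x} ⊆ S := by
    rintro _ ⟨z, hz, _, rfl, rfl⟩
    exact hS (add_le_of_nonpos_right (sub_nonpos.2 hyx)) hz
  refine convexHull_mono hshift ?_
  rw [convexHull_add, convexHull_singleton]
  exact ⟨x, hx, y - x, rfl, add_sub_cancel x y⟩

theorem IsLowerSet.eq_of_mem_extremePoints_of_le (hS : IsLowerSet S) {v w : E}
    (hv : v ∈ S.extremePoints ℝ) (hw : w ∈ S) (hvw : v ≤ w) : w = v := by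
  have hreflect : v - (w - v) ∈ S :=
    hS ((sub_le_self _ (sub_nonneg.2 hvw)).trans hvw) hw
  have hmid : v ∈ openSegment ℝ (v - (w - v)) w :=
    ⟨1 / 2, 1 / 2, by norm_num, by norm_num, by norm_num, by module⟩
  simpa [sub_eq_zero] using hv.2 hreflect hw hmid

end OrderedModule

section LinearFunctional

variable {E : Type*} [AddCommGroup E] [Module ℝ E]

theorem convex_setOf_lt_union_singleton (f : E →ₗ[ℝ] ℝ) (v : E) :
    Convex ℝ ({z | f z < f v} ∪ {v}) := by
  intro x hx y hy a c ha hc hac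
  simp only [Set.mem_union, Set.mem_ofPred_eq, Set.mem_singleton_iff, map_add, map_smul,
    smul_eq_mul] at hx hy ⊢
  rcases hx with hx | rfl <;> rcases hy with hy | rfl
  · left
    rcases ha.eq_or_lt with rfl | ha
    · rw [zero_add] at hac; simpa [hac] using hy
    · nlinarith [mul_lt_mul_of_pos_left hx ha, mul_le_mul_of_nonneg_left hy.le hc,
        congrArg (· * f v) hac]
  · rcases ha.eq_or_lt with rfl | ha
    · right; rw [zero_add] at hac; simp [hac]
    · left; nlinarith [mul_lt_mul_of_pos_left hx ha, congrArg (· * f y) hac]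
  · rcases hc.eq_or_lt with rfl | hc
    · right; rw [add_zero] at hac; simp [hac]
    · left; nlinarith [mul_lt_mul_of_pos_left hy hc, congrArg (· * f x) hac]
  · right; exact Convex.combo_self hac _

theorem mem_extremePoints_convexHull_of_forall_lt {s : Set E} {v : E} (f : E →ₗ[ℝ] ℝ)
    (hv : v ∈ s) (hlt : ∀ z ∈ s, z ≠ v → f z < f v) :
    v ∈ (convexHull ℝ s).extremePoints ℝ := by
  have hsub : convexHull ℝ s ⊆ {z | f z < f v} ∪ {v} :=
    convexHull_min (fun z hz => (eq_or_ne z v).elim Or.inr fun h => Or.inl (hlt z hz h))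
      (convex_setOf_lt_union_singleton f v)
  refine ⟨subset_convexHull ℝ s hv, fun x hx y hy ⟨a, c, ha, hc, hac, hxy⟩ => ?_⟩
  by_contra hxv
  have hfx : f x < f v := (hsub hx).resolve_right hxv
  have hfy : f y ≤ f v := (hsub hy).elim (fun h => le_of_lt h) fun h => (congrArg f h).le
  have hcomb : f v = a * f x + c * f y := by rw [← hxy]; simp
  nlinarith [mul_lt_mul_of_pos_left hfx ha, mul_le_mul_of_nonneg_left hfy hc.le,
    congrArg (· * f v) hac]

end LinearFunctional

/-- The chord from `u` to `w` meets the horizontal line through `v` weakly left of `v`,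
i.e. `w` lies weakly below the line through `u` and `v`. -/
theorem IsLowerSet.wedge_le_of_mem_extremePoints {S : Set (ℝ × ℝ)} (hS : IsLowerSet S)
    (hconv : Convex ℝ S) {u v w : ℝ × ℝ} (hv : v ∈ S.extremePoints ℝ) (hu : u ∈ S) (hw : w ∈ S)
    (hvu : v.2 < u.2) (hwv : w.2 < v.2) :
    (w.1 - v.1) * (u.2 - v.2) ≤ (w.2 - v.2) * (u.1 - v.1) := by
  have hd : 0 < u.2 - w.2 := by linarith
  set t := (u.2 - v.2) / (u.2 - w.2)
  have ht01 : t ∈ Set.Icc (0 : ℝ) 1 :=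
    ⟨div_nonneg (by linarith) hd.le, (div_le_one hd).2 (by linarith)⟩
  set a := u + t • (w - u)
  have ha : a ∈ S := hconv.add_smul_sub_mem hu hw ht01
  have htd : t * (u.2 - w.2) = u.2 - v.2 := div_mul_cancel₀ _ hd.ne'
  have ha2 : a.2 = v.2 := by
    simp only [a, Prod.snd_add, Prod.smul_snd, Prod.snd_sub, smul_eq_mul]; linarith
  have ha1 : a.1 ≤ v.1 := by
    by_contra! hlt
    have hav := hS.eq_of_mem_extremePoints_of_le hv ha (Prod.mk_le_mk.2 ⟨hlt.le, ha2.ge⟩)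
    exact hlt.ne' (congrArg Prod.fst hav)
  have hcross : (a.1 - v.1) * (u.2 - w.2) =
      (w.1 - v.1) * (u.2 - v.2) - (w.2 - v.2) * (u.1 - v.1) := by
    simp only [a, Prod.fst_add, Prod.smul_fst, Prod.fst_sub, smul_eq_mul]
    linear_combination (w.1 - u.1) * htd
  nlinarith

theorem isLowerSet_newtonPolygon (b : ℕ → ℕ → ℂ) : IsLowerSet (newtonPolygon b) := by
  refine IsLowerSet.convexHull (isLowerSet_iUnion fun i => isLowerSet_iUnion fun j =>
    isLowerSet_iUnion fun _ => ?_)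
  convert isLowerSet_Iic ((i : ℝ), (j : ℝ)) using 1
  ext p
  simp [quadrant, Prod.le_def]

theorem convex_newtonPolygon (b : ℕ → ℕ → ℂ) : Convex ℝ (newtonPolygon b) :=
  convex_convexHull ℝ _

theorem mem_newtonPolygon {b : ℕ → ℕ → ℂ} {i j : ℕ} (hb : b i j ≠ 0) :
    ((i : ℝ), (j : ℝ)) ∈ newtonPolygon b :=
  subset_convexHull ℝ _ (Set.mem_iUnion₂.2 ⟨i, j, Set.mem_iUnion.2 ⟨hb, le_rfl, le_rfl⟩⟩)

theorem exists_coeff_ne_zero_of_mem_extremePoints {b : ℕ → ℕ → ℂ} {v : ℝ × ℝ}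
    (hv : v ∈ (newtonPolygon b).extremePoints ℝ) :
    ∃ i j : ℕ, b i j ≠ 0 ∧ v = ((i : ℝ), (j : ℝ)) := by
  obtain ⟨i, j, hv'⟩ := Set.mem_iUnion₂.1 (extremePoints_convexHull_subset hv)
  obtain ⟨hb, hvij⟩ := Set.mem_iUnion.1 hv'
  exact ⟨i, j, hb, ((isLowerSet_newtonPolygon b).eq_of_mem_extremePoints_of_le hv
    (mem_newtonPolygon hb) hvij).symm⟩

def newtonSupport (b : ℕ → ℕ → ℂ) : Set (ℕ × ℕ) := {p | b p.1 p.2 ≠ 0}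

theorem mem_extremePoints_newtonPolygon_of_forall_lt {b : ℕ → ℕ → ℂ} {L : ℝ} (hL : 0 < L)
    {p : ℕ × ℕ} (hp : p ∈ newtonSupport b)
    (hlt : ∀ q ∈ newtonSupport b, q ≠ p → (q.1 : ℝ) + L * q.2 < p.1 + L * p.2) :
    ((p.1 : ℝ), (p.2 : ℝ)) ∈ (newtonPolygon b).extremePoints ℝ := by
  set f : ℝ × ℝ →ₗ[ℝ] ℝ := LinearMap.fst ℝ ℝ ℝ + L • LinearMap.snd ℝ ℝ ℝ
  have hf : ∀ z : ℝ × ℝ, f z = z.1 + L * z.2 := fun z => rfl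
  refine mem_extremePoints_convexHull_of_forall_lt f
    (Set.mem_iUnion₂.2 ⟨p.1, p.2, Set.mem_iUnion.2 ⟨hp, le_rfl, le_rfl⟩⟩) ?_
  simp only [Set.mem_iUnion, quadrant, hf]
  rintro z ⟨i, j, hij, hzi, hzj⟩ hzp
  by_cases hq : (i, j) = p
  · subst hq
    rcases hzi.lt_or_eq with hzi | hzi
    · nlinarith
    · rcases hzj.lt_or_eq with hzj | hzj
      · nlinarith
      · exact absurd (Prod.ext hzi hzj) hzp
  · have := hlt (i, j) hij hq
    simp only at this
    nlinarith

/-- Among the maximisers of `x + L y` on a finite support, one with the largest `y` is the unique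
maximiser of `x + (L + ε) y` for small `ε > 0`, hence a vertex. -/
theorem exists_mem_extremePoints_forall_le {b : ℕ → ℕ → ℂ} (hfin : (newtonSupport b).Finite)
    (hne : (newtonSupport b).Nonempty) {L : ℝ} (hL : 0 < L) :
    ∃ p ∈ newtonSupport b, ((p.1 : ℝ), (p.2 : ℝ)) ∈ (newtonPolygon b).extremePoints ℝ ∧
      ∀ q ∈ newtonSupport b, (q.1 : ℝ) + L * q.2 ≤ p.1 + L * p.2 := by
  obtain ⟨p₀, hp₀, hmax⟩ :=
    Set.exists_max_image _ (fun q : ℕ × ℕ => (q.1 : ℝ) + L * q.2) hfin hne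
  obtain ⟨p, ⟨hp, hpp₀⟩, hptop⟩ := Set.exists_max_image
    {q ∈ newtonSupport b | (q.1 : ℝ) + L * q.2 = p₀.1 + L * p₀.2} Prod.snd
    (hfin.subset (Set.sep_subset _ _)) ⟨p₀, hp₀, rfl⟩
  have hperturb : ∀ᶠ ε in 𝓝[>] (0 : ℝ), ∀ q ∈ newtonSupport b,
      q ≠ p → (q.1 : ℝ) + (L + ε) * q.2 < p.1 + (L + ε) * p.2 := by
    refine (eventually_all_finite hfin).2 fun q hq => ?_
    rcases (hmax q hq).lt_or_eq with hlt | heq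
    · have hcont : ∀ᶠ ε in 𝓝 (0 : ℝ), (q.1 : ℝ) + (L + ε) * q.2 < p.1 + (L + ε) * p.2 :=
        ContinuousAt.eventually_lt (by fun_prop) (by fun_prop) (by simpa [hpp₀] using hlt)
      exact (eventually_nhdsWithin_of_eventually_nhds hcont).mono fun ε h _ => h
    · filter_upwards [self_mem_nhdsWithin] with ε (hε : 0 < ε) hqp
      have hq2 : q.2 < p.2 := (hptop q ⟨hq, heq⟩).lt_of_ne fun h2 =>
        hqp (Prod.ext (by rw [h2, ← hpp₀] at heq; exact_mod_cast add_right_cancel heq) h2)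
      have hq2' : (q.2 : ℝ) < p.2 := by exact_mod_cast hq2
      nlinarith
  obtain ⟨ε, hε, hεpos⟩ := (hperturb.and self_mem_nhdsWithin).exists
  refine ⟨p, hp, mem_extremePoints_newtonPolygon_of_forall_lt (add_pos hL hεpos) hp hε,
    fun q hq => (hmax q hq).trans_eq hpp₀.symm⟩

namespace IsNewtonVertexData

variable {b : ℕ → ℕ → ℂ} {s : ℕ} {n m : ℕ → ℕ}

theorem mem_extremePoints (h : IsNewtonVertexData b s n m) {k : ℕ} (hk : k ∈ Set.Icc 1 s) :
    ((n k : ℝ), (m k : ℝ)) ∈ (newtonPolygon b).extremePoints ℝ :=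
  h.2.2.2 ▸ ⟨k, hk, rfl⟩

theorem exists_eq_of_mem_extremePoints (h : IsNewtonVertexData b s n m) {i j : ℕ}
    (hv : ((i : ℝ), (j : ℝ)) ∈ (newtonPolygon b).extremePoints ℝ) :
    ∃ k ∈ Set.Icc 1 s, n k = i ∧ m k = j := by
  rw [h.2.2.2] at hv
  obtain ⟨k, hk, hkv⟩ := hv
  simp only [Prod.mk.injEq, Nat.cast_inj] at hkv
  exact ⟨k, hk, hkv⟩

theorem coeff_ne_zero (h : IsNewtonVertexData b s n m) {k : ℕ} (hk : k ∈ Set.Icc 1 s) :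
    b (n k) (m k) ≠ 0 := by
  obtain ⟨i, j, hb, hv⟩ := exists_coeff_ne_zero_of_mem_extremePoints (h.mem_extremePoints hk)
  simp only [Prod.mk.injEq, Nat.cast_inj] at hv
  rwa [hv.1, hv.2]

theorem snd_le_snd_one (h : IsNewtonVertexData b s n m) {k : ℕ} (hk : k ∈ Set.Icc 1 s) :
    m k ≤ m 1 := by
  rcases hk.1.eq_or_lt with rfl | h1k
  · exact le_rfl
  · exact (h.2.2.1 ⟨le_rfl, hk.1.trans hk.2⟩ hk h1k).le

theorem fst_add_one_le_and_snd_add_one_le (h : IsNewtonVertexData b s n m) (hs : 2 ≤ s) :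
    (n 1 : ℝ) + 1 ≤ n 2 ∧ (m 2 : ℝ) + 1 ≤ m 1 := by
  have h1 : (1 : ℕ) ∈ Set.Icc 1 s := ⟨le_rfl, by omega⟩
  have h2 : (2 : ℕ) ∈ Set.Icc 1 s := ⟨by norm_num, hs⟩
  have hn : n 1 < n 2 := h.2.1 h1 h2 one_lt_two
  have hm : m 2 < m 1 := h.2.2.1 h1 h2 one_lt_two
  exact ⟨by exact_mod_cast hn, by exact_mod_cast hm⟩

theorem fst_le_of_coeff_ne_zero (h : IsNewtonVertexData b s n m) (hs : 2 ≤ s) {i j : ℕ}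
    (hb : b i j ≠ 0) :
    i ≤ n 2 + n 2 * m 2 := by
  have h1 : (1 : ℕ) ∈ Set.Icc 1 s := ⟨le_rfl, by omega⟩
  have h2 : (2 : ℕ) ∈ Set.Icc 1 s := ⟨by norm_num, hs⟩
  obtain ⟨hn, hm⟩ := h.fst_add_one_le_and_snd_add_one_le hs
  by_contra! hi
  have hj : j < m 2 := by
    by_contra! hj
    have hv := (isLowerSet_newtonPolygon b).eq_of_mem_extremePoints_of_le
      (h.mem_extremePoints h2) (mem_newtonPolygon hb)
      (Prod.mk_le_mk.2 ⟨by exact_mod_cast (by omega : n 2 ≤ i), by exact_mod_cast hj⟩)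
    have : (i : ℝ) = n 2 := congrArg Prod.fst hv
    have : i = n 2 := by exact_mod_cast this
    omega
  have hw := (isLowerSet_newtonPolygon b).wedge_le_of_mem_extremePoints
    (convex_newtonPolygon b) (h.mem_extremePoints h2) (h.mem_extremePoints h1).1
    (mem_newtonPolygon hb) (by simp only; linarith) (by simp only; exact_mod_cast hj)
  simp only at hw
  have hi' : (n 2 : ℝ) + n 2 * m 2 < i := by exact_mod_cast hi
  have hj' : (j : ℝ) < m 2 := by exact_mod_cast hj
  have hgap : (i - n 2 : ℝ) ≤ (i - n 2) * (m 1 - m 2) :=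
    le_mul_of_one_le_right (by nlinarith) (by linarith)
  have hbound : (m 2 - j : ℝ) * (n 2 - n 1) ≤ m 2 * n 2 :=
    mul_le_mul (by simp) (by simp) (by linarith) (by positivity)
  nlinarith

theorem snd_le_add_of_coeff_ne_zero (h : IsNewtonVertexData b s n m) (hs : 2 ≤ s) {i j : ℕ}
    (hb : b i j ≠ 0) : j ≤ m 1 + n 1 * m 1 := by
  have h1 : (1 : ℕ) ∈ Set.Icc 1 s := ⟨le_rfl, by omega⟩
  have h2 : (2 : ℕ) ∈ Set.Icc 1 s := ⟨by norm_num, hs⟩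
  obtain ⟨hn, hm⟩ := h.fst_add_one_le_and_snd_add_one_le hs
  by_contra! hj
  have hi : i < n 1 := by
    by_contra! hi
    have hv := (isLowerSet_newtonPolygon b).eq_of_mem_extremePoints_of_le
      (h.mem_extremePoints h1) (mem_newtonPolygon hb)
      (Prod.mk_le_mk.2 ⟨by exact_mod_cast hi, by exact_mod_cast (by omega : m 1 ≤ j)⟩)
    have : (j : ℝ) = m 1 := congrArg Prod.snd hv
    have : j = m 1 := by exact_mod_cast this
    omega
  have hw := (isLowerSet_newtonPolygon b).wedge_le_of_mem_extremePoints
    (convex_newtonPolygon b) (h.mem_extremePoints h1) (mem_newtonPolygon hb)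
    (h.mem_extremePoints h2).1 (by simp only; exact_mod_cast (by omega : m 1 < j))
    (by simp only; linarith)
  simp only at hw
  have hj' : (m 1 : ℝ) + n 1 * m 1 < j := by exact_mod_cast hj
  have hi' : (i : ℝ) < n 1 := by exact_mod_cast hi
  have hgap : (j - m 1 : ℝ) ≤ (n 2 - n 1) * (j - m 1) :=
    le_mul_of_one_le_left (by nlinarith) (by linarith)
  have hbound : (m 1 - m 2 : ℝ) * (n 1 - i) ≤ m 1 * n 1 :=
    mul_le_mul (by simp) (by simp) (by linarith) (by positivity)
  nlinarith

theorem finite_newtonSupport (h : IsNewtonVertexData b s n m) (hs : 2 ≤ s) :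
    (newtonSupport b).Finite :=
  ((Set.finite_Iic _).prod (Set.finite_Iic _)).subset fun _ hp =>
    ⟨h.fst_le_of_coeff_ne_zero hs hp, h.snd_le_add_of_coeff_ne_zero hs hp⟩

/-- Maximising `x + L y` with `L` larger than every exponent of `z` picks a vertex of largest
`y`-coordinate, which is at most `m 1`. -/
theorem snd_le_of_coeff_ne_zero (h : IsNewtonVertexData b s n m) (hs : 2 ≤ s) {i j : ℕ}
    (hb : b i j ≠ 0) :
    j ≤ m 1 := by
  set N := n 2 + n 2 * m 2
  obtain ⟨p, hp, hext, hpmax⟩ := exists_mem_extremePoints_forall_le (h.finite_newtonSupport hs)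
    ⟨(i, j), hb⟩ (L := N + 1) (by positivity)
  obtain ⟨k, hk, -, hmk⟩ := h.exists_eq_of_mem_extremePoints hext
  have hp2 : (p.2 : ℝ) ≤ m 1 := by rw [← hmk]; exact_mod_cast h.snd_le_snd_one hk
  have hp1 : (p.1 : ℝ) ≤ N := by exact_mod_cast h.fst_le_of_coeff_ne_zero hs hp
  have hij := hpmax (i, j) hb
  simp only at hij
  by_contra! hj
  have hj' : (m 1 : ℝ) + 1 ≤ j := by exact_mod_cast hj
  nlinarith [(Nat.cast_nonneg i : (0 : ℝ) ≤ i), (Nat.cast_nonneg N : (0 : ℝ) ≤ N)]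

/-- The vertex maximising `x + l₁ y` is `v₁`, `v₂` (both on the edge) or a later vertex `vₖ`, which
lies below the line through `v₁` and `v₂` because `v₂` is extreme. -/
theorem add_mul_le_of_coeff_ne_zero (h : IsNewtonVertexData b s n m) (hs : 2 ≤ s) {l₁ : ℝ}
    (hl : l₁ = ((n 2 : ℝ) - (n 1 : ℝ)) / ((m 1 : ℝ) - (m 2 : ℝ))) {i j : ℕ} (hb : b i j ≠ 0) :
    (i : ℝ) + l₁ * j ≤ n 1 + l₁ * m 1 := by
  have h1 : (1 : ℕ) ∈ Set.Icc 1 s := ⟨le_rfl, by omega⟩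
  have h2 : (2 : ℕ) ∈ Set.Icc 1 s := ⟨by norm_num, hs⟩
  obtain ⟨hn, hm⟩ := h.fst_add_one_le_and_snd_add_one_le hs
  have hslope : l₁ * (m 1 - m 2) = n 2 - n 1 := by
    rw [hl]; exact div_mul_cancel₀ _ (by linarith)
  have hl₁ : 0 < l₁ := by rw [hl]; exact div_pos (by linarith) (by linarith)
  obtain ⟨p, hp, hext, hpmax⟩ :=
    exists_mem_extremePoints_forall_le (h.finite_newtonSupport hs) ⟨(i, j), hb⟩ hl₁
  obtain ⟨k, hk, hnk, hmk⟩ := h.exists_eq_of_mem_extremePoints hext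
  refine (hpmax (i, j) hb).trans ?_
  rw [← hnk, ← hmk]
  rcases (show k = 1 ∨ k = 2 ∨ 2 < k by have := hk.1; omega) with rfl | rfl | h2k
  · exact le_rfl
  · linarith
  · have hnk2 : (n 2 : ℝ) < n k := by exact_mod_cast h.2.1 h2 hk h2k
    have hmk2 : (m k : ℝ) < m 2 := by exact_mod_cast h.2.2.1 h2 hk h2k
    have hw := (isLowerSet_newtonPolygon b).wedge_le_of_mem_extremePoints
      (convex_newtonPolygon b) (h.mem_extremePoints h2) (h.mem_extremePoints h1).1
      (h.mem_extremePoints hk).1 (by simp only; linarith) (by simp only; linarith)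
    simp only at hw
    have hcross : (n k + l₁ * m k - (n 1 + l₁ * m 1) : ℝ) * (m 1 - m 2) =
        (n k - n 2) * (m 1 - m 2) - (m k - m 2) * (n 1 - n 2) := by
      linear_combination ((m k : ℝ) - m 1) * hslope
    nlinarith

theorem forall_add_mul_le_iff (h : IsNewtonVertexData b s n m) (hs : 2 ≤ s) {l₁ : ℝ}
    (hl : l₁ = ((n 2 : ℝ) - (n 1 : ℝ)) / ((m 1 : ℝ) - (m 2 : ℝ))) (l : ℝ) :
    (∀ i j : ℕ, b i j ≠ 0 → (i : ℝ) + l * j ≤ n 1 + l * m 1) ↔ l₁ ≤ l := by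
  obtain ⟨hn, hm⟩ := h.fst_add_one_le_and_snd_add_one_le hs
  refine ⟨fun hall => ?_, fun hl₁l i j hb => ?_⟩
  · have h2 := hall _ _ (h.coeff_ne_zero (k := 2) ⟨by norm_num, hs⟩)
    rw [hl, div_le_iff₀ (by linarith)]
    linarith
  · have hj : (j : ℝ) ≤ m 1 := by exact_mod_cast h.snd_le_of_coeff_ne_zero hs hb
    nlinarith [h.add_mul_le_of_coeff_ne_zero hs hl hb]

theorem sSup_slopes_eq (h : IsNewtonVertexData b s n m) (hs : 2 ≤ s) {l₁ : ℝ}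
    (hl : l₁ = ((n 2 : ℝ) - (n 1 : ℝ)) / ((m 1 : ℝ) - (m 2 : ℝ))) :
    sSup {x : ℝ | ∃ i j : ℕ, b i j ≠ 0 ∧ j < m 1 ∧
      x = ((i : ℝ) - (n 1 : ℝ)) / ((m 1 : ℝ) - (j : ℝ))} = l₁ := by
  refine IsGreatest.csSup_eq ⟨⟨n 2, m 2, h.coeff_ne_zero ⟨by norm_num, hs⟩,
    h.2.2.1 ⟨le_rfl, by omega⟩ ⟨by norm_num, hs⟩ one_lt_two, hl⟩, ?_⟩
  rintro _ ⟨i, j, hb, hj, rfl⟩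
  have hj' : (j : ℝ) < m 1 := by exact_mod_cast hj
  rw [div_le_iff₀ (by linarith)]
  linarith [h.add_mul_le_of_coeff_ne_zero hs hl hb]

end IsNewtonVertexData

theorem stmt8_general (b : ℕ → ℕ → ℂ) (s : ℕ) (n m : ℕ → ℕ)
    (h : IsNewtonVertexData b s n m) (hs : 2 ≤ s)
    (δ : ℕ) (hd : m 1 < δ)
    (l₁ α₀ : ℝ)
    (hl : l₁ = ((n 2 : ℝ) - (n 1 : ℝ)) / ((m 1 : ℝ) - (m 2 : ℝ)))
    (hα : α₀ = (n 1 : ℝ) / ((δ : ℝ) - (m 1 : ℝ))) :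
    {l : ℝ | 0 < l ∧ ∀ i j : ℕ, b i j ≠ 0 →
        (i : ℝ) + l * (j : ℝ) ≤ (n 1 : ℝ) + l * (m 1 : ℝ) ∧
        l * (δ : ℝ) ≤ (n 1 : ℝ) + l * (m 1 : ℝ)} =
      Set.Icc
        (sSup {x : ℝ | ∃ i j : ℕ, b i j ≠ 0 ∧ j < m 1 ∧
          x = ((i : ℝ) - (n 1 : ℝ)) / ((m 1 : ℝ) - (j : ℝ))}) α₀ ∧
    sSup {x : ℝ | ∃ i j : ℕ, b i j ≠ 0 ∧ j < m 1 ∧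
        x = ((i : ℝ) - (n 1 : ℝ)) / ((m 1 : ℝ) - (j : ℝ))} = l₁ := by
  have hsup := h.sSup_slopes_eq hs hl
  refine ⟨?_, hsup⟩
  obtain ⟨hn, hm⟩ := h.fst_add_one_le_and_snd_add_one_le hs
  have hl₁ : 0 < l₁ := by rw [hl]; exact div_pos (by linarith) (by linarith)
  have hb1 : b (n 1) (m 1) ≠ 0 := h.coeff_ne_zero ⟨le_rfl, by omega⟩
  have hδ : ∀ l : ℝ, l * δ ≤ n 1 + l * m 1 ↔ l ≤ α₀ := fun l => by
    have hd' : (m 1 : ℝ) < δ := by exact_mod_cast hd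
    rw [hα, le_div_iff₀ (by linarith)]
    constructor <;> intro <;> linarith
  ext l
  rw [hsup, Set.mem_Icc, ← h.forall_add_mul_le_iff hs hl, ← hδ]
  constructor
  · rintro ⟨-, hall⟩
    exact ⟨fun i j hb => (hall i j hb).1, (hall _ _ hb1).2⟩
  · rintro ⟨hall, hlδ⟩
    exact ⟨hl₁.trans_le ((h.forall_add_mul_le_iff hs hl l).1 hall),
      fun i j hb => ⟨hall i j hb, hlδ⟩⟩

/-- Case 2 interval of weights: with `(γ,d) = (n 1, m 1)`, `δ > d`, `γ > 0` and `δ ≤ T₁`,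
the set `I_f = { l > 0 : γ + l d ≥ i + l j and γ + l d ≥ l δ for all (i,j) with b_{ij} ≠ 0 }`
equals the closed interval `[ max_{j < d, b_{ij} ≠ 0} (i − γ)/(d − j), α₀ ]` with
`α₀ = γ/(δ − d)`, and its minimum is `l₁ = (n₂ − n₁)/(m₁ − m₂)`. -/
theorem stmt8 (b : ℕ → ℕ → ℂ) (s : ℕ) (n m : ℕ → ℕ)
    (h : IsNewtonVertexData b s n m) (hs : 2 ≤ s)
    (δ : ℕ) (hδ : 2 ≤ δ) (hd : m 1 < δ) (hγ : 0 < n 1)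
    (l₁ α₀ : ℝ)
    (hl : l₁ = ((n 2 : ℝ) - (n 1 : ℝ)) / ((m 1 : ℝ) - (m 2 : ℝ)))
    (hα : α₀ = (n 1 : ℝ) / ((δ : ℝ) - (m 1 : ℝ)))
    (hδT : (δ : ℝ) ≤ (m 1 : ℝ) + (n 1 : ℝ) / l₁) :
    {l : ℝ | 0 < l ∧ ∀ i j : ℕ, b i j ≠ 0 →
        (i : ℝ) + l * (j : ℝ) ≤ (n 1 : ℝ) + l * (m 1 : ℝ) ∧
        l * (δ : ℝ) ≤ (n 1 : ℝ) + l * (m 1 : ℝ)} =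
      Set.Icc
        (sSup {x : ℝ | ∃ i j : ℕ, b i j ≠ 0 ∧ j < m 1 ∧
          x = ((i : ℝ) - (n 1 : ℝ)) / ((m 1 : ℝ) - (j : ℝ))}) α₀ ∧
    sSup {x : ℝ | ∃ i j : ℕ, b i j ≠ 0 ∧ j < m 1 ∧
        x = ((i : ℝ) - (n 1 : ℝ)) / ((m 1 : ℝ) - (j : ℝ))} = l₁ :=
  stmt8_general b s n m h hs δ hd l₁ α₀ hl hα
end
end

section
/- With F₀(Z,W) = (δZ, γZ + dW), δ > d ≥ 2, γ ≥ 0, and Φ the uniform limit of Φₙ = F₀^{−n} ∘ Fⁿ where ‖F − F₀‖ < ε̃ on an invariant set, the limit satisfies ‖Φ − id‖ < max{ 1/(δ−1), 1/(d−1) + (γ/(δ−d))(1/(d−1) − 1/(δ−1)) } · ε̃. -/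
noncomputable section

/-- `γ_n = Σ_{j=1}^n δ^{n−j} d^{j−1} γ`. -/
def gammaSeq (δ d γ : ℕ) (n : ℕ) : ℕ :=
  ∑ j ∈ Finset.range n, δ ^ (n - 1 - j) * d ^ j * γ

/-- `Φₙ = F₀^{−n} ∘ Fⁿ` with `F₀(Z,W) = (δZ, γZ + dW)`. -/
def Phi (δ d γ : ℕ) (F : ℂ × ℂ → ℂ × ℂ) (n : ℕ) (p : ℂ × ℂ) : ℂ × ℂ :=
  ((F^[n] p).1 / (δ : ℂ) ^ n,
    (F^[n] p).2 / (d : ℂ) ^ n -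
      (gammaSeq δ d γ n : ℂ) * (F^[n] p).1 / ((δ : ℂ) ^ n * (d : ℂ) ^ n))

lemma gammaSeq_succ (δ d γ n : ℕ) :
    gammaSeq δ d γ (n+1) = d * gammaSeq δ d γ n + δ^n * γ := by
  unfold gammaSeq
  rw [Finset.sum_range_succ', Finset.mul_sum]
  congr 1
  · refine Finset.sum_congr rfl fun j hj => ?_
    have h : n + 1 - 1 - (j+1) = n - 1 - j := by omega
    rw [h]; ring
  · simp

lemma gammaSeq_closed (δ d γ : ℕ) (n : ℕ) :
    (gammaSeq δ d γ n : ℝ) * ((δ:ℝ) - d) = (γ:ℝ) * ((δ:ℝ)^n - (d:ℝ)^n) := by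
  induction n with
  | zero => simp [gammaSeq]
  | succ n ih =>
    rw [gammaSeq_succ]
    push_cast
    linear_combination (d:ℝ) * ih

lemma aux_alg2 (x y D d g g' γ A B Z W : ℂ) (hx : x ≠ 0) (hy : y ≠ 0) (hD : D ≠ 0) (hd : d ≠ 0)
    (hg' : g' = d*g + x*γ) :
    (B/(y*d) - g'*A/((x*D)*(y*d))) - (W/y - g*Z/(x*y)) =
    (B - (γ*Z + d*W))/(y*d) - g'*(A - D*Z)/((x*D)*(y*d)) := by
  have h1 : y*d ≠ 0 := mul_ne_zero hy hd
  have h2 : (x*D)*(y*d) ≠ 0 := mul_ne_zero (mul_ne_zero hx hD) h1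
  have h3 : x*y ≠ 0 := mul_ne_zero hx hy
  rw [div_sub_div _ _ h1 h2, div_sub_div _ _ hy h3,
      div_sub_div _ _ (mul_ne_zero h1 h2) (mul_ne_zero hy h3),
      div_sub_div _ _ h1 h2,
      div_eq_div_iff (mul_ne_zero (mul_ne_zero h1 h2) (mul_ne_zero hy h3)) (mul_ne_zero h1 h2)]
  subst hg'
  ring

lemma aux_alg1 (x D A Z : ℂ) (hx : x ≠ 0) (hD : D ≠ 0) :
    A/(x*D) - Z/x = (A - D*Z)/(x*D) := by
  rw [div_sub_div _ _ (mul_ne_zero hx hD) hx,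
      div_eq_div_iff (mul_ne_zero (mul_ne_zero hx hD) hx) (mul_ne_zero hx hD)]
  ring

lemma phi_step (δ d γ : ℕ) (hδ : (δ:ℂ) ≠ 0) (hdc : (d:ℂ) ≠ 0)
    (F : ℂ × ℂ → ℂ × ℂ) (n : ℕ) (p : ℂ × ℂ) :
    Phi δ d γ F (n+1) p - Phi δ d γ F n p =
      (((F (F^[n] p)).1 - (δ:ℂ) * (F^[n] p).1) / (δ:ℂ)^(n+1),
       ((F (F^[n] p)).2 - ((γ:ℂ) * (F^[n] p).1 + (d:ℂ) * (F^[n] p).2)) / (d:ℂ)^(n+1)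
         - (gammaSeq δ d γ (n+1) : ℂ) * ((F (F^[n] p)).1 - (δ:ℂ) * (F^[n] p).1) /
            ((δ:ℂ)^(n+1) * (d:ℂ)^(n+1))) := by
  have hg : (gammaSeq δ d γ (n+1) : ℂ) = (d:ℂ) * (gammaSeq δ d γ n : ℂ) + (δ:ℂ)^n * (γ:ℂ) := by
    rw [gammaSeq_succ]; push_cast; ring
  have hx : (δ:ℂ)^n ≠ 0 := pow_ne_zero _ hδ
  have hy : (d:ℂ)^n ≠ 0 := pow_ne_zero _ hdc
  refine Prod.ext ?_ ?_ <;>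
    simp only [Phi, Function.iterate_succ_apply', Prod.fst_sub, Prod.snd_sub, pow_succ]
  · exact aux_alg1 _ _ _ _ hx hδ
  · exact aux_alg2 _ _ _ _ _ _ _ _ _ _ _ hx hy hδ hdc hg

lemma aux_r1 (E1 E Dp dp g : ℝ) (h1 : 0 ≤ E1) (hE1 : E1 ≤ E)
    (hdp : 0 < dp) (hDp : 0 < Dp) (hdD : dp ≤ Dp) (hg : 0 ≤ g) :
    E1 / Dp ≤ E * (1/dp + g * (1/Dp * (1/dp))) := by
  have hE : 0 ≤ E := h1.trans hE1
  calc E1 / Dp ≤ E / dp := div_le_div₀ hE hE1 hdp hdD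
    _ = E * (1/dp) := by ring
    _ ≤ E * (1/dp + g * (1/Dp * (1/dp))) := by
        apply mul_le_mul_of_nonneg_left _ hE
        have : 0 ≤ g * (1/Dp * (1/dp)) := by positivity
        linarith

lemma aux_r2 (E1 E2 E Dp dp g : ℝ) (h1 : 0 ≤ E1) (h2 : 0 ≤ E2) (hE1 : E1 ≤ E) (hE2 : E2 ≤ E)
    (hdp : 0 < dp) (hDp : 0 < Dp) (hg : 0 ≤ g) :
    E2 / dp + g * E1 / (Dp * dp) ≤ E * (1/dp + g * (1/Dp * (1/dp))) := by
  have hE : 0 ≤ E := h1.trans hE1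
  have hA : E2 / dp ≤ E / dp := by gcongr
  have hB : g * E1 / (Dp * dp) ≤ g * E / (Dp * dp) := by gcongr
  have hfin : E / dp + g * E / (Dp * dp) = E * (1/dp + g * (1/Dp * (1/dp))) := by
    field_simp
  linarith

lemma aux_c (g B A Bp : ℝ) (hA : A ≠ 0) (hB : Bp ≠ 0)
    (hg : g = B * (Bp - A)) :
    1/A + g * (1/Bp * (1/A)) = (1 + B)/A - B/Bp := by
  subst hg
  field_simp
  ring

set_option maxHeartbeats 1000000 in
/-- If `δ > d ≥ 2`, `‖F − F₀‖ < ε` on an `F`-invariant set `S`, and `Φ` is the limit of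
`Φₙ = F₀^{−n} ∘ Fⁿ`, then
`‖Φ − id‖ < max{1/(δ−1), 1/(d−1) + (γ/(δ−d))(1/(d−1) − 1/(δ−1))} ε` on `S`. -/
theorem stmt18 (δ d γ : ℕ) (hd : 2 ≤ d) (hδd : d < δ)
    (S : Set (ℂ × ℂ)) (F : ℂ × ℂ → ℂ × ℂ) (hInv : Set.MapsTo F S S)
    (ε : ℝ) (hε : 0 < ε)
    (hF : ∀ p ∈ S, ‖F p - ((δ : ℂ) * p.1, (γ : ℂ) * p.1 + (d : ℂ) * p.2)‖ < ε)
    (Φ : ℂ × ℂ → ℂ × ℂ)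
    (hΦ : ∀ p ∈ S, Filter.Tendsto (fun n => Phi δ d γ F n p) Filter.atTop (nhds (Φ p))) :
    ∀ p ∈ S,
      ‖Φ p - p‖ <
        max (1 / ((δ : ℝ) - 1))
          (1 / ((d : ℝ) - 1) +
            ((γ : ℝ) / ((δ : ℝ) - (d : ℝ))) * (1 / ((d : ℝ) - 1) - 1 / ((δ : ℝ) - 1))) * ε := by
  intro p hp
  have hd2 : (2:ℝ) ≤ (d:ℝ) := by exact_mod_cast hd
  have hdδ : (d:ℝ) < (δ:ℝ) := by exact_mod_cast hδd
  have hd0 : (0:ℝ) < d := by linarith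
  have hδ0 : (0:ℝ) < δ := by linarith
  have hδc : (δ:ℂ) ≠ 0 := Nat.cast_ne_zero.mpr (by omega)
  have hdc : (d:ℂ) ≠ 0 := Nat.cast_ne_zero.mpr (by omega)
  -- iterates stay in S
  have hqS : ∀ n, F^[n] p ∈ S := by
    intro n
    induction n with
    | zero => simpa using hp
    | succ n ih => rw [Function.iterate_succ_apply']; exact hInv ih
  -- the error at step n
  set e : ℕ → ℂ × ℂ := fun n =>
    F (F^[n] p) - ((δ:ℂ) * (F^[n] p).1, (γ:ℂ) * (F^[n] p).1 + (d:ℂ) * (F^[n] p).2) with he_def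
  have he : ∀ n, ‖e n‖ < ε := fun n => hF _ (hqS n)
  -- the increments
  set diff : ℕ → ℂ × ℂ := fun n => Phi δ d γ F (n+1) p - Phi δ d γ F n p with hdiff_def
  -- the comparison sequence
  set c : ℕ → ℝ := fun m =>
    1/(d:ℝ)^m + (gammaSeq δ d γ m : ℝ) * (1/(δ:ℝ)^m * (1/(d:ℝ)^m)) with hc_def
  have hc0 : ∀ m, 0 ≤ c m := by
    intro m
    simp only [hc_def]
    positivity
  -- the norm bound on increments
  have hbound : ∀ n, ‖diff n‖ ≤ ‖e n‖ * c (n+1) := by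
    intro n
    have hstep := phi_step δ d γ hδc hdc F n p
    have hE1 : ‖(F (F^[n] p)).1 - (δ:ℂ) * (F^[n] p).1‖ ≤ ‖e n‖ := by
      simpa [he_def] using norm_fst_le (e n)
    have hE2 : ‖(F (F^[n] p)).2 - ((γ:ℂ) * (F^[n] p).1 + (d:ℂ) * (F^[n] p).2)‖ ≤ ‖e n‖ := by
      simpa [he_def] using norm_snd_le (e n)
    have hdp : (0:ℝ) < (d:ℝ)^(n+1) := by positivity
    have hDp : (0:ℝ) < (δ:ℝ)^(n+1) := by positivity
    have hdD : (d:ℝ)^(n+1) ≤ (δ:ℝ)^(n+1) := pow_le_pow_left₀ hd0.le hdδ.le _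
    have hgn : (0:ℝ) ≤ (gammaSeq δ d γ (n+1) : ℝ) := Nat.cast_nonneg _
    simp only [hdiff_def]
    rw [hstep, Prod.norm_def]
    simp only [hc_def]
    apply max_le
    · simp only [norm_div, norm_pow, Complex.norm_natCast]
      exact aux_r1 _ _ _ _ _ (norm_nonneg _) hE1 hdp hDp hdD hgn
    · refine le_trans (norm_sub_le _ _) ?_
      simp only [norm_div, norm_mul, norm_pow, Complex.norm_natCast]
      exact aux_r2 _ _ _ _ _ _ (norm_nonneg _) (norm_nonneg _) hE1 hE2 hdp hDp hgn
  -- geometric form of c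
  set B : ℝ := (γ:ℝ) / ((δ:ℝ) - (d:ℝ)) with hB_def
  have hDd : (δ:ℝ) - (d:ℝ) ≠ 0 := by linarith
  have hcf : ∀ n, c (n+1) = ((1+B)/(d:ℝ)) * (1/(d:ℝ))^n - (B/(δ:ℝ)) * (1/(δ:ℝ))^n := by
    intro n
    have hg2 : (gammaSeq δ d γ (n+1) : ℝ) = B * ((δ:ℝ)^(n+1) - (d:ℝ)^(n+1)) := by
      rw [hB_def, div_mul_eq_mul_div, eq_div_iff hDd]
      linear_combination gammaSeq_closed δ d γ (n+1)
    have hAne : ((d:ℝ))^(n+1) ≠ 0 := by positivity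
    have hBne : ((δ:ℝ))^(n+1) ≠ 0 := by positivity
    have h := aux_c (gammaSeq δ d γ (n+1) : ℝ) B ((d:ℝ)^(n+1)) ((δ:ℝ)^(n+1)) hAne hBne hg2
    simp only [hc_def]
    rw [h, one_div_pow, one_div_pow, div_mul_div_comm, div_mul_div_comm, mul_one, mul_one,
        ← pow_succ', ← pow_succ']
  -- geometric summability
  have hr1a : (0:ℝ) ≤ 1/(d:ℝ) := by positivity
  have hr1b : 1/(d:ℝ) < 1 := by rw [div_lt_one hd0]; linarith
  have hr2a : (0:ℝ) ≤ 1/(δ:ℝ) := by positivity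
  have hr2b : 1/(δ:ℝ) < 1 := by rw [div_lt_one hδ0]; linarith
  have hs1 : Summable (fun n : ℕ => (1/(d:ℝ))^n) := summable_geometric_of_lt_one hr1a hr1b
  have hs2 : Summable (fun n : ℕ => (1/(δ:ℝ))^n) := summable_geometric_of_lt_one hr2a hr2b
  have hsc : Summable (fun n => c (n+1)) := by
    refine Summable.congr (((hs1.mul_left _).sub (hs2.mul_left _))) fun n => (hcf n).symm
  -- value of the sum
  set Cval : ℝ := 1 / ((d:ℝ) - 1) + B * (1 / ((d:ℝ) - 1) - 1 / ((δ:ℝ) - 1)) with hCval_def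
  have htsum : ∑' n, c (n+1) = Cval := by
    calc ∑' n, c (n+1)
        = ∑' n, (((1+B)/(d:ℝ)) * (1/(d:ℝ))^n - (B/(δ:ℝ)) * (1/(δ:ℝ))^n) := tsum_congr hcf
      _ = ((1+B)/(d:ℝ)) * ∑' n : ℕ, (1/(d:ℝ))^n - (B/(δ:ℝ)) * ∑' n : ℕ, (1/(δ:ℝ))^n := by
          rw [Summable.tsum_sub (hs1.mul_left _) (hs2.mul_left _), tsum_mul_left, tsum_mul_left]
      _ = ((1+B)/(d:ℝ)) * (1 - 1/(d:ℝ))⁻¹ - (B/(δ:ℝ)) * (1 - 1/(δ:ℝ))⁻¹ := by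
          rw [tsum_geometric_of_lt_one hr1a hr1b, tsum_geometric_of_lt_one hr2a hr2b]
      _ = Cval := by
          rw [hCval_def]
          have h1 : (d:ℝ) ≠ 0 := by linarith
          have h2 : (δ:ℝ) ≠ 0 := by linarith
          have h3 : (d:ℝ) - 1 ≠ 0 := by linarith
          have h4 : (δ:ℝ) - 1 ≠ 0 := by linarith
          field_simp
          ring
  -- telescoping
  have hPhi0 : Phi δ d γ F 0 p = p := by
    simp [Phi, gammaSeq]
  have hpartial : ∀ N, ∑ n ∈ Finset.range N, diff n = Phi δ d γ F N p - p := by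
    intro N
    simp only [hdiff_def]
    rw [Finset.sum_range_sub (fun n => Phi δ d γ F n p), hPhi0]
  have hlim : Filter.Tendsto (fun N => ∑ n ∈ Finset.range N, diff n)
      Filter.atTop (nhds (Φ p - p)) := by
    simp only [hpartial]
    exact (hΦ p hp).sub_const p
  have hsnorm : Summable (fun n => ‖diff n‖) := by
    refine Summable.of_nonneg_of_le (fun n => norm_nonneg _)
      (fun n => (hbound n).trans (mul_le_mul_of_nonneg_right (he n).le (hc0 _)))
      (hsc.mul_left ε)
  have hsd : Summable diff := hsnorm.of_norm
  have htd : ∑' n, diff n = Φ p - p :=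
    tendsto_nhds_unique hsd.hasSum.tendsto_sum_nat hlim
  -- strict bound
  have hc1pos : 0 < c 1 := by
    have h1 : (0:ℝ) < 1/(d:ℝ)^1 := by positivity
    have h2 : (0:ℝ) ≤ (gammaSeq δ d γ 1 : ℝ) * (1/(δ:ℝ)^1 * (1/(d:ℝ)^1)) := by positivity
    have h3 : c 1 = 1/(d:ℝ)^1 + (gammaSeq δ d γ 1 : ℝ) * (1/(δ:ℝ)^1 * (1/(d:ℝ)^1)) := by
      simp only [hc_def]
    rw [h3]
    linarith
  have hsnorm1 : Summable (fun n => ‖diff (n+1)‖) := (summable_nat_add_iff 1).mpr hsnorm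
  have hsc2 : Summable (fun n => ε * c (n+2)) :=
    (((summable_nat_add_iff 1).mpr hsc)).mul_left ε
  have key : ‖Φ p - p‖ < ε * Cval := by
    calc ‖Φ p - p‖ = ‖∑' n, diff n‖ := by rw [htd]
      _ ≤ ∑' n, ‖diff n‖ := norm_tsum_le_tsum_norm hsnorm
      _ = ‖diff 0‖ + ∑' n, ‖diff (n+1)‖ := Summable.tsum_eq_zero_add hsnorm
      _ < ε * c 1 + ∑' n, ε * c (n+2) := by
          apply add_lt_add_of_lt_of_le
          · exact lt_of_le_of_lt (hbound 0)
              (mul_lt_mul_of_pos_right (he 0) hc1pos)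
          · refine Summable.tsum_le_tsum (fun n => (hbound (n+1)).trans
              (mul_le_mul_of_nonneg_right (he (n+1)).le (hc0 _))) hsnorm1 hsc2
      _ = ε * (c 1 + ∑' n, c (n+2)) := by rw [tsum_mul_left, ← mul_add]
      _ = ε * ∑' n, c (n+1) := by rw [Summable.tsum_eq_zero_add hsc]
      _ = ε * Cval := by rw [htsum]
  have hCle : Cval ≤ max (1 / ((δ : ℝ) - 1))
      (1 / ((d : ℝ) - 1) + ((γ : ℝ) / ((δ : ℝ) - (d : ℝ))) * (1 / ((d : ℝ) - 1) - 1 / ((δ : ℝ) - 1))) := by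
    rw [hCval_def, hB_def]
    exact le_max_right _ _
  calc ‖Φ p - p‖ < ε * Cval := key
    _ ≤ max (1 / ((δ : ℝ) - 1))
        (1 / ((d : ℝ) - 1) + ((γ : ℝ) / ((δ : ℝ) - (d : ℝ))) * (1 / ((d : ℝ) - 1) - 1 / ((δ : ℝ) - 1))) * ε := by
        rw [mul_comm]
        exact mul_le_mul_of_nonneg_right hCle hε.le
end
end
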